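/- arXiv:0809.1521 — 4 statements merged into one kernel-verified Lean document; each statement's English description precedes it below -/
import Mathlib

section
/- If k ∈ C^r([a,b]×[a,b]) and k_N is the degenerate kernel obtained by piecewise Lagrange interpolation of degree r−1 in both variables at the Gauss points of a partition with mesh h, then ‖K − K_N‖ = O(h^r) as h → 0, where K and K_N are the corresponding integral operators on L^∞[a,b]. -/
open MeasureTheory Set

/-- The Lagrange basis polynomial at nodes `τ` associated with the node `τ i`. -/
noncomputable def lagrangeBasis {r : ℕ} (τ : Fin r → ℝ) (i : Fin r) (t : ℝ) : ℝ :=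
  ∏ j ∈ Finset.univ.erase i, ((t - τ j) / (τ i - τ j))

/-- The composite Gauss node on the subinterval `[x_j, x_{j+1}]` corresponding to the
reference node `τ i`, i.e. the image of `τ i` under the affine map
`f_j(t) = ((1−t)/2) x_j + ((1+t)/2) x_{j+1}`. -/
noncomputable def gaussNode {n r : ℕ} (x : Fin (n + 1) → ℝ) (τ : Fin r → ℝ)
    (p : Fin n × Fin r) : ℝ :=
  (1 - τ p.2) / 2 * x p.1.castSucc + (1 + τ p.2) / 2 * x p.1.succ

/-- The piecewise Lagrange basis function supported on `[x_j, x_{j+1}]`, equal there to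
`ℓ_i ∘ f_j⁻¹` and zero elsewhere. -/
noncomputable def piecewiseBasis {n r : ℕ} (x : Fin (n + 1) → ℝ) (τ : Fin r → ℝ)
    (p : Fin n × Fin r) (y : ℝ) : ℝ :=
  if y ∈ Icc (x p.1.castSucc) (x p.1.succ) then
    lagrangeBasis τ p.2 ((2 * y - (x p.1.castSucc + x p.1.succ)) /
      (x p.1.succ - x p.1.castSucc))
  else 0

/-- The degenerate kernel obtained by piecewise Lagrange interpolation of `k` in both
variables at the composite Gauss nodes. -/
noncomputable def degenerateKernel {n r : ℕ} (k : ℝ × ℝ → ℝ) (x : Fin (n + 1) → ℝ)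
    (τ : Fin r → ℝ) (y u : ℝ) : ℝ :=
  ∑ p : Fin n × Fin r, ∑ q : Fin n × Fin r,
    k (gaussNode x τ p, gaussNode x τ q) * piecewiseBasis x τ p y * piecewiseBasis x τ q u

/-!
On a pair of cells `[x_j, x_{j+1}] × [x_m, x_{m+1}]` the degenerate kernel is the tensor-product
Lagrange interpolant of `k` at the mapped nodes. Interpolating first in `u` and then in `y`, its
error is at most `1 + Λ` times the worst one-dimensional interpolation error along a segment
parallel to an axis, where `Λ` bounds the Lebesgue function `∑ i, |ℓ_i|` on `[-1, 1]`. Since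
interpolation reproduces polynomials of degree `< r`, such an error is at most `1 + Λ` times the
distance of the restricted kernel to its Taylor polynomial, which is `O(h^r)` because a segment
through a cell has length at most `h` and `D^r k` is bounded on the compact square. Grid points
are null, so `|k - k_N| = O(h^r)` almost everywhere on `[a, b]²`, and an integral operator on
`L^∞` has norm at most the essential supremum of its kernel times the measure of `[a, b]`.
-/

open Polynomial in
theorem lagrangeBasis_eq_eval_basis {r : ℕ} (τ : Fin r → ℝ) (i : Fin r) (t : ℝ) :
    lagrangeBasis τ i t = (Lagrange.basis Finset.univ τ i).eval t := by
  simp only [lagrangeBasis, Lagrange.basis, Lagrange.basisDivisor, eval_prod, eval_mul,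
    eval_C, eval_sub, eval_X, div_eq_inv_mul]

theorem continuous_lagrangeBasis {r : ℕ} (τ : Fin r → ℝ) (i : Fin r) :
    Continuous (lagrangeBasis τ i) :=
  continuous_finsetProd _ fun _ _ => (continuous_id.sub continuous_const).div_const _

theorem exists_sum_abs_lagrangeBasis_le {r : ℕ} (τ : Fin r → ℝ) :
    ∃ Λ, ∀ s ∈ Icc (-1 : ℝ) 1, ∑ i, |lagrangeBasis τ i s| ≤ Λ :=
  let ⟨Λ, hΛ⟩ := isCompact_Icc.exists_bound_of_continuousOn
    (continuous_finsetSum _ fun i _ => (continuous_lagrangeBasis τ i).abs).continuousOn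
  ⟨Λ, fun s hs => (le_abs_self _).trans (hΛ s hs)⟩

open Polynomial in
theorem sum_eval_mul_lagrangeBasis {r : ℕ} {τ : Fin r → ℝ} (hτ : Function.Injective τ)
    {q : ℝ[X]} (hq : q.degree < r) (s : ℝ) :
    ∑ i, q.eval (τ i) * lagrangeBasis τ i s = q.eval s := by
  conv_rhs => rw [Lagrange.eq_interpolate (s := Finset.univ) (f := q) hτ.injOn (by simpa using hq)]
  simp [Lagrange.interpolate_apply, eval_finsetSum, lagrangeBasis_eq_eval_basis]

/-- Lebesgue's lemma: interpolation reproduces polynomials of degree `< r`. -/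
theorem abs_sub_sum_mul_lagrangeBasis_le {r : ℕ} {τ : Fin r → ℝ} (hτ : Function.Injective τ)
    {q : Polynomial ℝ} (hq : q.degree < r) {g : ℝ → ℝ} {s E : ℝ}
    (hs : |g s - q.eval s| ≤ E) (hnodes : ∀ i, |g (τ i) - q.eval (τ i)| ≤ E) :
    |g s - ∑ i, g (τ i) * lagrangeBasis τ i s| ≤ (1 + ∑ i, |lagrangeBasis τ i s|) * E := by
  have hsplit : g s - ∑ i, g (τ i) * lagrangeBasis τ i s =
      (g s - q.eval s) - ∑ i, (g (τ i) - q.eval (τ i)) * lagrangeBasis τ i s := by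
    simp only [sub_mul, Finset.sum_sub_distrib, sum_eval_mul_lagrangeBasis hτ hq]
    ring
  have hsum : |∑ i, (g (τ i) - q.eval (τ i)) * lagrangeBasis τ i s| ≤
      (∑ i, |lagrangeBasis τ i s|) * E := by
    rw [Finset.sum_mul]
    refine (Finset.abs_sum_le_sum_abs _ _).trans (Finset.sum_le_sum fun i _ => ?_)
    rw [abs_mul, mul_comm]
    exact mul_le_mul_of_nonneg_left (hnodes i) (abs_nonneg _)
  rw [hsplit]
  linarith [abs_sub (g s - q.eval s) (∑ i, (g (τ i) - q.eval (τ i)) * lagrangeBasis τ i s)]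

open Polynomial in
theorem exists_degree_lt_abs_sub_eval_le {g : ℝ → ℝ} {c d B : ℝ} {n : ℕ} (hcd : c ≤ d)
    (hg : ContDiffOn ℝ (n + 1) g (Icc c d))
    (hB : ∀ t ∈ Icc c d, |iteratedDerivWithin (n + 1) g (Icc c d) t| ≤ B) :
    ∃ q : ℝ[X], q.degree < ↑(n + 1) ∧
      ∀ t ∈ Icc c d, |g t - q.eval t| ≤ B * (d - c) ^ (n + 1) / n.factorial := by
  refine ⟨∑ i ∈ Finset.range (n + 1),
    taylorCoeffWithin g i (Icc c d) c • (X - C c) ^ i, ?_, fun t ht => ?_⟩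
  · refine mem_degreeLT.mp (Submodule.sum_mem _ fun i hi =>
      Submodule.smul_mem _ _ (mem_degreeLT.mpr ?_))
    rw [degree_pow, degree_X_sub_C, nsmul_one]
    exact_mod_cast Finset.mem_range.mp hi
  · have htaylor : (∑ i ∈ Finset.range (n + 1),
        taylorCoeffWithin g i (Icc c d) c • (X - C c) ^ i).eval t =
        taylorWithinEval g n (Icc c d) c t := by
      simp [taylor_within_apply, taylorCoeffWithin, eval_finsetSum, mul_comm, mul_assoc]
    rw [htaylor]
    refine (taylor_mean_remainder_bound hcd hg ht hB).trans ?_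
    have : t - c ≤ d - c := by linarith [ht.2]
    have hB0 : 0 ≤ B := (abs_nonneg _).trans (hB c ⟨le_rfl, hcd⟩)
    have htc : 0 ≤ t - c := by linarith [ht.1]
    gcongr

section LineRestriction

variable {F : Type*} [NormedAddCommGroup F] [NormedSpace ℝ F]

theorem fderivWithin_const_add_smul (c w : F) {s : Set ℝ} (hs : UniqueDiffOn ℝ s) {t : ℝ}
    (ht : t ∈ s) :
    fderivWithin ℝ (fun v : ℝ => c + v • w) s t = (1 : ℝ →L[ℝ] ℝ).smulRight w := by
  have : HasFDerivAt (fun v : ℝ => c + v • w) ((1 : ℝ →L[ℝ] ℝ).smulRight w) t := by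
    simpa using (((1 : ℝ →L[ℝ] ℝ).smulRight w).hasFDerivAt (x := t)).const_add c
  exact this.hasFDerivWithinAt.fderivWithin (hs t ht)

theorem norm_iteratedFDerivWithin_const_add_smul_le (c w : F) {s : Set ℝ}
    (hs : UniqueDiffOn ℝ s) {t : ℝ} (ht : t ∈ s) {i : ℕ} (hi : 1 ≤ i) :
    ‖iteratedFDerivWithin ℝ i (fun v : ℝ => c + v • w) s t‖ ≤ ‖w‖ ^ i := by
  obtain ⟨j, rfl⟩ := Nat.exists_eq_add_of_le' hi
  rw [← norm_iteratedFDerivWithin_fderivWithin hs ht,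
    iteratedFDerivWithin_congr (fun v hv => fderivWithin_const_add_smul c w hs hv) ht]
  rcases j with _ | j
  · simp [ContinuousLinearMap.norm_smulRight_apply]
  · simp [iteratedFDerivWithin_const_of_ne (Nat.succ_ne_zero j)]

theorem abs_iteratedDerivWithin_comp_const_add_smul_le {S : Set F} (hS : UniqueDiffOn ℝ S)
    {r : ℕ} {k : F → ℝ} (hk : ContDiffOn ℝ r k S) {M : ℝ}
    (hM : ∀ i ≤ r, ∀ z ∈ S, ‖iteratedFDerivWithin ℝ i k S z‖ ≤ M) {c w : F}
    (hcw : MapsTo (fun v : ℝ => c + v • w) (Icc (-1) 1) S) {t : ℝ} (ht : t ∈ Icc (-1 : ℝ) 1) :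
    |iteratedDerivWithin r (k ∘ fun v : ℝ => c + v • w) (Icc (-1) 1) t| ≤
      r.factorial * M * ‖w‖ ^ r := by
  have hI : UniqueDiffOn ℝ (Icc (-1 : ℝ) 1) := uniqueDiffOn_Icc (by norm_num)
  rw [← Real.norm_eq_abs, norm_iteratedFDerivWithin_eq_norm_iteratedDerivWithin.symm]
  exact norm_iteratedFDerivWithin_comp_le hk (contDiff_const.add (contDiff_id.smul
    contDiff_const)).contDiffOn le_rfl hS hI hcw ht (fun i hi => hM i hi _ (hcw ht))
    (fun i hi _ => norm_iteratedFDerivWithin_const_add_smul_le c w hI ht hi)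

end LineRestriction

theorem exists_bound_iteratedFDerivWithin {E F : Type*} [NormedAddCommGroup E]
    [NormedSpace ℝ E] [NormedAddCommGroup F] [NormedSpace ℝ F] {S : Set E} (hS : IsCompact S)
    (hS' : UniqueDiffOn ℝ S) {r : ℕ} {k : E → F} (hk : ContDiffOn ℝ r k S) :
    ∃ M, ∀ i ≤ r, ∀ z ∈ S, ‖iteratedFDerivWithin ℝ i k S z‖ ≤ M := by
  have hcont : ContinuousOn
      (fun z => ∑ i ∈ Finset.range (r + 1), ‖iteratedFDerivWithin ℝ i k S z‖) S :=
    continuousOn_finsetSum _ fun i hi => (hk.continuousOn_iteratedFDerivWithin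
      (by exact_mod_cast Finset.mem_range_succ_iff.mp hi) hS').norm
  obtain ⟨M, hM⟩ := hS.exists_bound_of_continuousOn hcont
  refine ⟨M, fun i hi z hz => ?_⟩
  refine le_trans ?_ ((le_abs_self _).trans (hM z hz))
  exact Finset.single_le_sum (f := fun i => ‖iteratedFDerivWithin ℝ i k S z‖)
    (fun _ _ => norm_nonneg _) (Finset.mem_range.mpr (Nat.lt_succ_of_le hi))

theorem abs_sub_sum_lagrangeBasis_along_segment_le {F : Type*} [NormedAddCommGroup F]
    [NormedSpace ℝ F] {S : Set F} (hS : UniqueDiffOn ℝ S) {r : ℕ} (hr : 0 < r) {k : F → ℝ}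
    (hk : ContDiffOn ℝ r k S) {M : ℝ}
    (hM : ∀ i ≤ r, ∀ z ∈ S, ‖iteratedFDerivWithin ℝ i k S z‖ ≤ M) {τ : Fin r → ℝ}
    (hτ : ∀ i, τ i ∈ Icc (-1 : ℝ) 1) (hτinj : Function.Injective τ) {c w : F}
    (hcw : MapsTo (fun v : ℝ => c + v • w) (Icc (-1) 1) S) {s : ℝ} (hs : s ∈ Icc (-1 : ℝ) 1)
    {Λ h : ℝ} (hΛ : ∑ i, |lagrangeBasis τ i s| ≤ Λ) (hw : 2 * ‖w‖ ≤ h) :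
    |k (c + s • w) - ∑ i, k (c + τ i • w) * lagrangeBasis τ i s| ≤ (1 + Λ) * (r * M * h ^ r) := by
  obtain ⟨n, rfl⟩ : ∃ n, r = n + 1 := ⟨r - 1, by omega⟩
  have hM0 : 0 ≤ M := (norm_nonneg _).trans (hM 0 (Nat.zero_le _) _ (hcw hs))
  have hg : ContDiffOn ℝ (n + 1) (k ∘ fun v : ℝ => c + v • w) (Icc (-1) 1) := by
    exact_mod_cast hk.comp (contDiff_const.add (contDiff_id.smul contDiff_const)).contDiffOn hcw
  obtain ⟨q, hq, hqg⟩ := exists_degree_lt_abs_sub_eval_le (by norm_num) hg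
    fun t ht => abs_iteratedDerivWithin_comp_const_add_smul_le hS hk hM hcw ht
  have hE : (n + 1).factorial * M * ‖w‖ ^ (n + 1) * (1 - -1) ^ (n + 1) / n.factorial =
      ((n + 1 : ℕ) : ℝ) * M * (2 * ‖w‖) ^ (n + 1) := by
    rw [Nat.factorial_succ]
    push_cast
    field_simp
    ring
  rw [hE] at hqg
  have hΛ0 : 0 ≤ 1 + Λ := by
    linarith [Finset.sum_nonneg fun i (_ : i ∈ Finset.univ) => abs_nonneg (lagrangeBasis τ i s)]
  refine (abs_sub_sum_mul_lagrangeBasis_le hτinj hq (hqg s hs) fun i => hqg _ (hτ i)).trans ?_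
  exact mul_le_mul (by linarith) (by gcongr) (by positivity) hΛ0

/-- Tensor-product interpolation: `h₂` is the error of interpolating in the second variable, `h₁`
that of interpolating the resulting values in the first. -/
theorem abs_sub_sum_sum_le_of_slices {ι κ : Type*} [Fintype ι] [Fintype κ] {z : ℝ}
    {z₂ : κ → ℝ} {z₁₂ : ι → κ → ℝ} {φ : ι → ℝ} {ψ : κ → ℝ} {e Λ : ℝ}
    (h₂ : |z - ∑ l, z₂ l * ψ l| ≤ e) (h₁ : ∀ l, |z₂ l - ∑ i, z₁₂ i l * φ i| ≤ e)
    (hψ : ∑ l, |ψ l| ≤ Λ) :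
    |z - ∑ i, ∑ l, z₁₂ i l * φ i * ψ l| ≤ (1 + Λ) * e := by
  have he : 0 ≤ e := (abs_nonneg _).trans h₂
  have hsplit : z - ∑ i, ∑ l, z₁₂ i l * φ i * ψ l =
      (z - ∑ l, z₂ l * ψ l) + ∑ l, (z₂ l - ∑ i, z₁₂ i l * φ i) * ψ l := by
    simp only [sub_mul, Finset.sum_sub_distrib, Finset.sum_mul]
    rw [Finset.sum_comm]
    ring
  have hsum : |∑ l, (z₂ l - ∑ i, z₁₂ i l * φ i) * ψ l| ≤ Λ * e := by
    refine (Finset.abs_sum_le_sum_abs _ _).trans ?_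
    calc ∑ l, |(z₂ l - ∑ i, z₁₂ i l * φ i) * ψ l| ≤ ∑ l, |ψ l| * e :=
          Finset.sum_le_sum fun l _ => by
            rw [abs_mul, mul_comm]; exact mul_le_mul_of_nonneg_left (h₁ l) (abs_nonneg _)
      _ ≤ Λ * e := by rw [← Finset.sum_mul]; exact mul_le_mul_of_nonneg_right hψ he
  rw [hsplit]
  linarith [abs_add_le (z - ∑ l, z₂ l * ψ l) (∑ l, (z₂ l - ∑ i, z₁₂ i l * φ i) * ψ l)]

section Partition

variable {n : ℕ} (x : Fin (n + 1) → ℝ)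

/-- The paper's affine map `f_j : [-1, 1] → [x_j, x_{j+1}]`; `cellCoord x j` is its inverse. -/
noncomputable def cellPoint (j : Fin n) (t : ℝ) : ℝ :=
  (x j.castSucc + x j.succ) / 2 + t * ((x j.succ - x j.castSucc) / 2)

noncomputable def cellCoord (j : Fin n) (y : ℝ) : ℝ :=
  (2 * y - (x j.castSucc + x j.succ)) / (x j.succ - x j.castSucc)

theorem gaussNode_eq_cellPoint {r : ℕ} (τ : Fin r → ℝ) (p : Fin n × Fin r) :
    gaussNode x τ p = cellPoint x p.1 (τ p.2) := by
  simp only [gaussNode, cellPoint]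
  ring

variable {x}

theorem cellPoint_cellCoord {j : Fin n} (hj : x j.castSucc < x j.succ) (y : ℝ) :
    cellPoint x j (cellCoord x j y) = y := by
  have : x j.succ - x j.castSucc ≠ 0 := by linarith
  simp only [cellPoint, cellCoord]
  field_simp
  ring

theorem cellCoord_mem_Icc {j : Fin n} (hj : x j.castSucc < x j.succ) {y : ℝ}
    (hy : y ∈ Icc (x j.castSucc) (x j.succ)) : cellCoord x j y ∈ Icc (-1 : ℝ) 1 := by
  have h : 0 < x j.succ - x j.castSucc := by linarith
  obtain ⟨h₁, h₂⟩ := hy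
  constructor
  · rw [cellCoord, le_div_iff₀ h]; linarith
  · rw [cellCoord, div_le_iff₀ h]; linarith

theorem cellPoint_mem_Icc {j : Fin n} (hj : x j.castSucc ≤ x j.succ) {t : ℝ}
    (ht : t ∈ Icc (-1 : ℝ) 1) : cellPoint x j t ∈ Icc (x j.castSucc) (x j.succ) := by
  obtain ⟨h₁, h₂⟩ := ht
  constructor <;> simp only [cellPoint] <;> nlinarith

theorem Icc_subset_of_partition {a b : ℝ} (hx : Monotone x) (hxa : x 0 = a)
    (hxb : x (Fin.last n) = b) (j : Fin n) : Icc (x j.castSucc) (x j.succ) ⊆ Icc a b :=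
  Icc_subset_Icc (hxa ▸ hx (Fin.zero_le _)) (hxb ▸ hx (Fin.le_last _))

theorem exists_mem_Ioo_of_forall_ne {y : ℝ}
    (hy : y ∈ Icc (x 0) (x (Fin.last n))) (hne : ∀ i, y ≠ x i) :
    ∃ j : Fin n, y ∈ Ioo (x j.castSucc) (x j.succ) := by
  classical
  set T := Finset.univ.filter fun i => x i < y
  have hT : T.Nonempty := ⟨0, by simpa [T] using hy.1.lt_of_ne (hne 0).symm⟩
  have hi : x (T.max' hT) < y := by simpa [T] using T.max'_mem hT
  obtain ⟨j, hj⟩ := Fin.exists_castSucc_eq.mpr fun h : T.max' hT = Fin.last n =>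
    (h ▸ hi).not_ge hy.2
  refine ⟨j, hj ▸ hi, lt_of_le_of_ne (not_lt.mp fun h => ?_) (hne _)⟩
  have : j.succ ≤ j.castSucc := hj ▸ T.le_max' _ (by simpa [T] using h)
  exact this.not_gt Fin.castSucc_lt_succ

theorem ae_exists_mem_Ioo :
    ∀ᵐ y ∂(volume.restrict (Icc (x 0) (x (Fin.last n)))),
      ∃ j : Fin n, y ∈ Ioo (x j.castSucc) (x j.succ) := by
  have hgrid : ∀ᵐ y ∂(volume.restrict (Icc (x 0) (x (Fin.last n)))), y ∉ range x :=
    measure_eq_zero_iff_ae_notMem.mp ((finite_range x).countable.measure_zero _)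
  filter_upwards [hgrid, ae_restrict_mem measurableSet_Icc] with y hy hmem
  exact exists_mem_Ioo_of_forall_ne hmem fun i h => hy ⟨i, h.symm⟩

end Partition

section DegenerateKernel

variable {n r : ℕ} {x : Fin (n + 1) → ℝ} {τ : Fin r → ℝ}

theorem piecewiseBasis_of_mem {p : Fin n × Fin r} {y : ℝ}
    (hy : y ∈ Icc (x p.1.castSucc) (x p.1.succ)) :
    piecewiseBasis x τ p y = lagrangeBasis τ p.2 (cellCoord x p.1 y) :=
  if_pos hy

theorem piecewiseBasis_of_mem_Ioo (hx : StrictMono x) {p : Fin n × Fin r} {j : Fin n} {y : ℝ}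
    (hy : y ∈ Ioo (x j.castSucc) (x j.succ)) :
    piecewiseBasis x τ p y = if p.1 = j then lagrangeBasis τ p.2 (cellCoord x j y) else 0 := by
  split_ifs with hpj
  · subst hpj
    exact piecewiseBasis_of_mem (Ioo_subset_Icc_self hy)
  refine if_neg fun hmem => ?_
  rcases lt_or_gt_of_ne hpj with h | h
  · exact (hy.1.trans_le hmem.2).not_ge (hx.monotone (Fin.succ_le_castSucc_iff.mpr h))
  · exact (hmem.1.trans_lt hy.2).not_ge (hx.monotone (Fin.succ_le_castSucc_iff.mpr h))

theorem degenerateKernel_of_mem_Ioo (hx : StrictMono x) (k : ℝ × ℝ → ℝ) {j m : Fin n}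
    {y u : ℝ} (hy : y ∈ Ioo (x j.castSucc) (x j.succ)) (hu : u ∈ Ioo (x m.castSucc) (x m.succ)) :
    degenerateKernel k x τ y u = ∑ i, ∑ l,
      k (cellPoint x j (τ i), cellPoint x m (τ l)) * lagrangeBasis τ i (cellCoord x j y) *
        lagrangeBasis τ l (cellCoord x m u) := by
  simp only [degenerateKernel, piecewiseBasis_of_mem_Ioo hx hy, piecewiseBasis_of_mem_Ioo hx hu,
    gaussNode_eq_cellPoint, Fintype.sum_prod_type, mul_ite, ite_mul, mul_zero, zero_mul,
    Finset.sum_ite_irrel, Finset.sum_const_zero, Finset.sum_ite_eq', Finset.mem_univ, if_true]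

end DegenerateKernel

theorem memLp_top_piecewiseBasis {n r : ℕ} (x : Fin (n + 1) → ℝ) (τ : Fin r → ℝ)
    (p : Fin n × Fin r) (μ : Measure ℝ) : MemLp (piecewiseBasis x τ p) ⊤ μ := by
  have hcont : Continuous fun y => lagrangeBasis τ p.2 (cellCoord x p.1 y) :=
    (continuous_lagrangeBasis τ p.2).comp (by unfold cellCoord; fun_prop)
  obtain ⟨C, hC⟩ := isCompact_Icc.exists_bound_of_continuousOn
    (hcont.continuousOn (s := Icc (x p.1.castSucc) (x p.1.succ)))
  refine memLp_top_of_bound ((Measurable.ite measurableSet_Icc hcont.measurable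
    measurable_const).aestronglyMeasurable) (max C 0) (Filter.Eventually.of_forall fun y => ?_)
  by_cases hy : y ∈ Icc (x p.1.castSucc) (x p.1.succ)
  · rw [piecewiseBasis_of_mem hy]; exact (hC y hy).trans (le_max_left _ _)
  · simp [piecewiseBasis, hy]

theorem memLp_top_degenerateKernel {n r : ℕ} (k : ℝ × ℝ → ℝ) (x : Fin (n + 1) → ℝ)
    (τ : Fin r → ℝ) (y : ℝ) (μ : Measure ℝ) : MemLp (degenerateKernel k x τ y) ⊤ μ :=
  memLp_finsetSum _ fun _ _ => memLp_finsetSum _ fun q _ =>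
    (memLp_top_piecewiseBasis x τ q μ).const_mul _

theorem abs_sub_degenerateKernel_le {a b : ℝ} (hab : a < b) {r : ℕ} (hr : 0 < r)
    {k : ℝ × ℝ → ℝ} (hk : ContDiffOn ℝ r k (Icc a b ×ˢ Icc a b)) {τ : Fin r → ℝ}
    (hτ : ∀ i, τ i ∈ Icc (-1 : ℝ) 1) (hτinj : Function.Injective τ) {M Λ : ℝ}
    (hM : ∀ i ≤ r, ∀ z ∈ Icc a b ×ˢ Icc a b,
      ‖iteratedFDerivWithin ℝ i k (Icc a b ×ˢ Icc a b) z‖ ≤ M)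
    (hΛ : ∀ s ∈ Icc (-1 : ℝ) 1, ∑ i, |lagrangeBasis τ i s| ≤ Λ)
    {n : ℕ} {x : Fin (n + 1) → ℝ} (hx : StrictMono x) (hxa : x 0 = a)
    (hxb : x (Fin.last n) = b) {h : ℝ} (hmesh : ∀ j : Fin n, x j.succ - x j.castSucc ≤ h)
    {j m : Fin n} {y u : ℝ} (hy : y ∈ Ioo (x j.castSucc) (x j.succ))
    (hu : u ∈ Ioo (x m.castSucc) (x m.succ)) :
    |k (y, u) - degenerateKernel k x τ y u| ≤ (1 + Λ) ^ 2 * (r * M * h ^ r) := by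
  have hS : UniqueDiffOn ℝ (Icc a b ×ˢ Icc a b) :=
    (uniqueDiffOn_Icc hab).prod (uniqueDiffOn_Icc hab)
  have hcell : ∀ i : Fin n, x i.castSucc < x i.succ := fun i => hx Fin.castSucc_lt_succ
  have hhalf : ∀ i : Fin n, 2 * ‖(x i.succ - x i.castSucc) / 2‖ ≤ h := fun i => by
    rw [Real.norm_of_nonneg (by linarith [hcell i])]; linarith [hmesh i]
  have hsub := Icc_subset_of_partition hx.monotone hxa hxb
  have hsy := cellCoord_mem_Icc (hcell j) (Ioo_subset_Icc_self hy)
  have hsu := cellCoord_mem_Icc (hcell m) (Ioo_subset_Icc_self hu)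
  rw [degenerateKernel_of_mem_Ioo hx k hy hu, sq, mul_assoc]
  refine abs_sub_sum_sum_le_of_slices (z₂ := fun l => k (y, cellPoint x m (τ l))) ?_
    (fun l => ?_) (hΛ _ hsu)
  · have hline : ∀ t : ℝ, ((y, (x m.castSucc + x m.succ) / 2) : ℝ × ℝ) +
        t • ((0 : ℝ), (x m.succ - x m.castSucc) / 2) = (y, cellPoint x m t) := fun t => by
      simp [cellPoint]
    have hmaps : MapsTo (fun t : ℝ => ((y, (x m.castSucc + x m.succ) / 2) : ℝ × ℝ) +
        t • ((0 : ℝ), (x m.succ - x m.castSucc) / 2)) (Icc (-1) 1) (Icc a b ×ˢ Icc a b) :=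
      fun t ht => by
        simpa only [hline] using
          ⟨hsub j (Ioo_subset_Icc_self hy), hsub m (cellPoint_mem_Icc (hcell m).le ht)⟩
    have hw : 2 * ‖((0 : ℝ), (x m.succ - x m.castSucc) / 2)‖ ≤ h := by
      rw [Prod.norm_mk, norm_zero, max_eq_right (norm_nonneg _)]; exact hhalf m
    simpa only [hline, cellPoint_cellCoord (hcell m)] using
      abs_sub_sum_lagrangeBasis_along_segment_le hS hr hk hM hτ hτinj hmaps hsu (hΛ _ hsu) hw
  · have hline : ∀ t : ℝ, (((x j.castSucc + x j.succ) / 2, cellPoint x m (τ l)) : ℝ × ℝ) +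
        t • ((x j.succ - x j.castSucc) / 2, (0 : ℝ)) = (cellPoint x j t, cellPoint x m (τ l)) :=
      fun t => by simp [cellPoint]
    have hmaps : MapsTo (fun t : ℝ => (((x j.castSucc + x j.succ) / 2, cellPoint x m (τ l)) :
        ℝ × ℝ) + t • ((x j.succ - x j.castSucc) / 2, (0 : ℝ))) (Icc (-1) 1)
        (Icc a b ×ˢ Icc a b) := fun t ht => by
      simpa only [hline] using ⟨hsub j (cellPoint_mem_Icc (hcell j).le ht),
        hsub m (cellPoint_mem_Icc (hcell m).le (hτ l))⟩
    have hw : 2 * ‖((x j.succ - x j.castSucc) / 2, (0 : ℝ))‖ ≤ h := by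
      rw [Prod.norm_mk, norm_zero, max_eq_left (norm_nonneg _)]; exact hhalf j
    simpa only [hline, cellPoint_cellCoord (hcell j)] using
      abs_sub_sum_lagrangeBasis_along_segment_le hS hr hk hM hτ hτinj hmaps hsy (hΛ _ hsy) hw

theorem ContinuousOn.memLp_top_restrict {X E : Type*} [TopologicalSpace X] [MeasurableSpace X]
    [OpensMeasurableSpace X] [NormedAddCommGroup E] [SecondCountableTopologyEither X E]
    {μ : Measure X} {s : Set X} {f : X → E} (hf : ContinuousOn f s) (hs : IsCompact s)
    (hsm : MeasurableSet s) : MemLp f ⊤ (μ.restrict s) :=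
  let ⟨C, hC⟩ := hs.exists_bound_of_continuousOn hf
  memLp_top_of_bound (hf.aestronglyMeasurable hsm) C (ae_restrict_of_forall_mem hsm hC)

theorem ae_memLp_top_slice {a b : ℝ} {k : ℝ × ℝ → ℝ} (hk : ContinuousOn k (Icc a b ×ˢ Icc a b)) :
    ∀ᵐ y ∂(volume.restrict (Icc a b)), MemLp (fun u => k (y, u)) ⊤ (volume.restrict (Icc a b)) := by
  filter_upwards [ae_restrict_mem measurableSet_Icc] with y hy
  exact (hk.comp (by fun_prop) fun u hu => ⟨hy, hu⟩).memLp_top_restrict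
    isCompact_Icc measurableSet_Icc

section IntegralOperator

variable {X : Type*} [MeasurableSpace X] {μ : Measure X}

theorem MeasureTheory.Lp.ae_norm_le_norm_top {E : Type*} [NormedAddCommGroup E] (f : Lp E ⊤ μ) :
    ∀ᵐ y ∂μ, ‖f y‖ ≤ ‖f‖ := by
  filter_upwards [enorm_ae_le_eLpNormEssSup f μ] with y hy
  rw [Lp.norm_def, eLpNorm_exponent_top, ← toReal_enorm]
  exact ENNReal.toReal_mono (by simpa [eLpNorm_exponent_top] using Lp.eLpNorm_ne_top f) hy

variable [IsFiniteMeasure μ]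

theorem norm_le_of_ae_eq_integral_kernel (T : Lp ℝ ⊤ μ →L[ℝ] Lp ℝ ⊤ μ) {κ : X → X → ℝ}
    {c : ℝ} (hc : 0 ≤ c) (hT : ∀ f, T f =ᵐ[μ] fun y => ∫ u, κ y u * f u ∂μ)
    (hκ : ∀ᵐ y ∂μ, ∀ᵐ u ∂μ, |κ y u| ≤ c) : ‖T‖ ≤ c * μ.real univ := by
  refine T.opNorm_le_bound (by positivity) fun f => ?_
  have hbound : ∀ᵐ y ∂μ, ‖T f y‖ ≤ c * μ.real univ * ‖f‖ := by
    filter_upwards [hT f, hκ] with y hy hκy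
    rw [hy, mul_right_comm]
    refine norm_integral_le_of_norm_le_const ?_
    filter_upwards [hκy, Lp.ae_norm_le_norm_top f] with u hu hfu
    rw [norm_mul, Real.norm_eq_abs]
    exact mul_le_mul hu hfu (norm_nonneg _) hc
  simpa using Lp.norm_le_of_ae_bound (by positivity) hbound

theorem sub_ae_eq_integral_kernel_sub {K KN : Lp ℝ ⊤ μ →L[ℝ] Lp ℝ ⊤ μ} {κ κN : X → X → ℝ}
    {α : ℝ} (hK : ∀ f, K f =ᵐ[μ] fun y => α * ∫ u, κ y u * f u ∂μ)
    (hKN : ∀ f, KN f =ᵐ[μ] fun y => α * ∫ u, κN y u * f u ∂μ)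
    (hκ : ∀ᵐ y ∂μ, MemLp (κ y) ⊤ μ) (hκN : ∀ᵐ y ∂μ, MemLp (κN y) ⊤ μ)
    (f : Lp ℝ ⊤ μ) :
    (K - KN) f =ᵐ[μ] fun y => ∫ u, α * (κ y u - κN y u) * f u ∂μ := by
  have hf : Integrable f μ := (Lp.memLp f).integrable le_top
  filter_upwards [Lp.coeFn_sub (K f) (KN f), hK f, hKN f, hκ, hκN] with y hsub hy hNy hκy hκNy
  have h₁ : Integrable (fun u => κ y u * f u) μ := hf.mul_of_top_right hκy
  have h₂ : Integrable (fun u => κN y u * f u) μ := hf.mul_of_top_right hκNy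
  rw [sub_apply, hsub, Pi.sub_apply, hy, hNy, ← mul_sub,
    ← integral_sub h₁ h₂, ← integral_const_mul]
  simp only [mul_sub, sub_mul, mul_assoc]

end IntegralOperator

/-- If `k ∈ C^r([a,b]²)` and `k_N` is the degenerate kernel obtained by piecewise Lagrange
interpolation of degree `r−1` in both variables at the (composite) Gauss points of a
partition with mesh `h`, then `‖K − K_N‖ = O(h^r)`, uniformly over partitions, for the
corresponding integral operators on `L^∞[a,b]`. -/
theorem degenerate_kernel_operator_error (a b : ℝ) (hab : a < b)
    (r : ℕ) (hr : 0 < r) (α : ℝ)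
    (k : ℝ × ℝ → ℝ) (hk : ContDiffOn ℝ r k (Icc a b ×ˢ Icc a b))
    (τ : Fin r → ℝ) (hτmem : ∀ i, τ i ∈ Icc (-1 : ℝ) 1) (hτinj : Function.Injective τ) :
    ∃ C : ℝ, ∀ (n : ℕ) (x : Fin (n + 1) → ℝ) (h : ℝ),
      0 < n → StrictMono x → x 0 = a → x (Fin.last n) = b →
      (∀ j : Fin n, x j.succ - x j.castSucc ≤ h) →
      ∀ K KN : Lp ℝ ⊤ (volume.restrict (Icc a b)) →L[ℝ]
          Lp ℝ ⊤ (volume.restrict (Icc a b)),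
        (∀ f : Lp ℝ ⊤ (volume.restrict (Icc a b)),
          ⇑(K f) =ᵐ[volume.restrict (Icc a b)]
            fun y => α * ∫ u in Icc a b, k (y, u) * f u) →
        (∀ f : Lp ℝ ⊤ (volume.restrict (Icc a b)),
          ⇑(KN f) =ᵐ[volume.restrict (Icc a b)]
            fun y => α * ∫ u in Icc a b, degenerateKernel k x τ y u * f u) →
        ‖K - KN‖ ≤ C * h ^ r := by
  obtain ⟨M, hM⟩ := exists_bound_iteratedFDerivWithin (isCompact_Icc.prod isCompact_Icc)
    ((uniqueDiffOn_Icc hab).prod (uniqueDiffOn_Icc hab)) hk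
  have hM0 : 0 ≤ M := (norm_nonneg _).trans
    (hM 0 r.zero_le (a, a) ⟨left_mem_Icc.2 hab.le, left_mem_Icc.2 hab.le⟩)
  obtain ⟨Λ, hΛ⟩ := exists_sum_abs_lagrangeBasis_le τ
  refine ⟨|α| * (1 + Λ) ^ 2 * (r * M) * (b - a),
    fun n x h hn hx hxa hxb hmesh K KN hK hKN => ?_⟩
  have hh : 0 ≤ h := (sub_pos.2 (hx (Fin.castSucc_lt_succ (i := ⟨0, hn⟩)))).le.trans (hmesh _)
  have hcells : ∀ᵐ y ∂(volume.restrict (Icc a b)), ∃ j : Fin n, y ∈ Ioo (x j.castSucc) (x j.succ) :=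
    hxa ▸ hxb ▸ ae_exists_mem_Ioo
  have hkernel : ∀ᵐ y ∂(volume.restrict (Icc a b)), ∀ᵐ u ∂(volume.restrict (Icc a b)),
      |α * (k (y, u) - degenerateKernel k x τ y u)| ≤ |α| * ((1 + Λ) ^ 2 * (r * M * h ^ r)) := by
    filter_upwards [hcells] with y ⟨j, hy⟩
    filter_upwards [hcells] with u ⟨m, hu⟩
    rw [abs_mul]
    exact mul_le_mul_of_nonneg_left (abs_sub_degenerateKernel_le hab hr hk hτmem hτinj hM hΛ
      hx hxa hxb hmesh hy hu) (abs_nonneg α)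
  calc ‖K - KN‖ ≤ |α| * ((1 + Λ) ^ 2 * (r * M * h ^ r)) * (volume.restrict (Icc a b)).real univ :=
        norm_le_of_ae_eq_integral_kernel _ (by positivity)
          (sub_ae_eq_integral_kernel_sub (κ := fun y u => k (y, u)) hK hKN
            (ae_memLp_top_slice hk.continuousOn)
            (.of_forall fun y => memLp_top_degenerateKernel k x τ y _)) hkernel
    _ = |α| * (1 + Λ) ^ 2 * (r * M) * (b - a) * h ^ r := by
        rw [measureReal_restrict_apply_univ, Real.volume_real_Icc_of_le hab.le]
        ring
end

section
/- If f is an eigenfunction of A_N = K_N − M_N with eigenvalue λ, λ ∉ {−m_1,...,−m_N}, then the vector c = (c_1,...,c_N) with c_j = ∫_a^b ψ_j(u) f(u) du is nonzero and satisfies λ c_i = α Σ_j k_{i,j} c_j − m_i c_i, where k_{i,j} = k(t_i,t_j) ∫_a^b ψ_i(x)² dx. -/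
/-!
Pair the eigenvalue equation with `ψ i` and integrate. Since `ψ i` is orthogonal to every other
`ψ p`, only the `i`-th term of the degenerate kernel survives, and since `s = m i` wherever
`ψ i ≠ 0`, the multiplication part contributes `m i * c i`. If all moments `c j` vanish, the
equation degenerates to `(λ + s y) f y = 0`, and `λ + s y ≠ 0` because `s` only takes the values
`m i`; so `f` vanishes on `[a, b]`.
-/

open MeasureTheory Set

section DegenerateKernel

variable {X ι 𝕜 : Type*} [MeasurableSpace X] {μ : Measure X} [Fintype ι] [RCLike 𝕜]

theorem integrable_mul_of_bounded [IsFiniteMeasure μ] {f g : X → 𝕜}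
    (hf : Measurable f) (hg : Measurable g)
    (hf_bd : ∃ B : ℝ, ∀ x, ‖f x‖ ≤ B) (hg_bd : ∃ B : ℝ, ∀ x, ‖g x‖ ≤ B) :
    Integrable (fun x => f x * g x) μ := by
  obtain ⟨Bf, hBf⟩ := hf_bd
  obtain ⟨Bg, hBg⟩ := hg_bd
  exact (Integrable.of_bound hg.aestronglyMeasurable Bg (ae_of_all _ hBg)).bdd_mul
    hf.aestronglyMeasurable (ae_of_all _ hBf)

theorem integral_degenerate_kernel_mul (κ : ι → ι → 𝕜) (ψ : ι → X → 𝕜) (f : X → 𝕜) (y : X)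
    (hψf : ∀ j, Integrable (fun u => ψ j u * f u) μ) :
    ∫ u, (∑ i, ∑ j, κ i j * ψ i y * ψ j u) * f u ∂μ =
      ∑ i, (∑ j, κ i j * ∫ u, ψ j u * f u ∂μ) * ψ i y := by
  have hsplit : ∀ u, (∑ i, ∑ j, κ i j * ψ i y * ψ j u) * f u =
      ∑ i, ∑ j, (κ i j * ψ i y) * (ψ j u * f u) := by
    intro u
    simp only [Finset.sum_mul, mul_assoc]
  simp_rw [hsplit]
  rw [integral_finsetSum _ fun i _ => integrable_finsetSum _ fun j _ => (hψf j).const_mul _]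
  refine Finset.sum_congr rfl fun i _ => ?_
  rw [integral_finsetSum _ fun j _ => (hψf j).const_mul _, Finset.sum_mul]
  refine Finset.sum_congr rfl fun j _ => ?_
  rw [integral_const_mul]
  ring

theorem integral_sum_mul_of_orthogonal (ψ : ι → X → 𝕜) (d : ι → 𝕜) (i : ι)
    (hψψ : ∀ p, Integrable (fun y => ψ i y * ψ p y) μ)
    (horth : ∀ p, i ≠ p → ∫ y, ψ i y * ψ p y ∂μ = 0) :
    ∫ y, ∑ p, d p * (ψ i y * ψ p y) ∂μ = d i * ∫ y, ψ i y ^ 2 ∂μ := by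
  rw [integral_finsetSum _ fun p _ => (hψψ p).const_mul _,
    Finset.sum_eq_single i (fun p _ hp => by rw [integral_const_mul, horth p hp.symm, mul_zero])
      (fun hi => absurd (Finset.mem_univ i) hi),
    integral_const_mul]
  simp_rw [sq]

theorem integral_mul_eq_of_eigen_eq (ψ : ι → X → 𝕜) (d : ι → 𝕜) (f s : X → 𝕜)
    (lam α m : 𝕜) (i : ι)
    (hψψ : ∀ p, Integrable (fun y => ψ i y * ψ p y) μ)
    (hψf : Integrable (fun y => ψ i y * f y) μ)
    (horth : ∀ p, i ≠ p → ∫ y, ψ i y * ψ p y ∂μ = 0)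
    (hs : ∀ y, ψ i y ≠ 0 → s y = m)
    (heig : ∀ᵐ y ∂μ, lam * f y = α * ∑ p, d p * ψ p y - s y * f y) :
    lam * ∫ y, ψ i y * f y ∂μ =
      α * (d i * ∫ y, ψ i y ^ 2 ∂μ) - m * ∫ y, ψ i y * f y ∂μ := by
  have hsψ : ∀ y, s y * ψ i y = m * ψ i y := fun y => by
    by_cases h : ψ i y = 0
    · simp [h]
    · rw [hs y h]
  have hpaired : ∀ᵐ y ∂μ, lam * (ψ i y * f y) =
      α * ∑ p, d p * (ψ i y * ψ p y) - m * (ψ i y * f y) := by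
    filter_upwards [heig] with y hy
    have hdist : ψ i y * ∑ p, d p * ψ p y = ∑ p, d p * (ψ i y * ψ p y) := by
      simp_rw [Finset.mul_sum, mul_left_comm]
    linear_combination ψ i y * hy - f y * hsψ y + α * hdist
  rw [← integral_const_mul, integral_congr_ae hpaired,
    integral_sub ((integrable_finsetSum _ fun p _ => (hψψ p).const_mul _).const_mul _)
      (hψf.const_mul _),
    integral_const_mul, integral_const_mul, integral_sum_mul_of_orthogonal ψ d i hψψ horth]

end DegenerateKernel

theorem eigenfunction_gives_matrix_eigenvector_general (a b : ℝ) (N : ℕ) (α : ℝ)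
    (ψ : Fin N → ℝ → ℂ) (hψmeas : ∀ i, Measurable (ψ i))
    (hψbd : ∀ i, ∃ B : ℝ, ∀ y, ‖ψ i y‖ ≤ B)
    (horth : ∀ i p : Fin N, i ≠ p → ∫ y in Icc a b, ψ i y * ψ p y = 0)
    (t : Fin N → ℝ) (k : ℝ → ℝ → ℂ) (m : Fin N → ℝ) (s : ℝ → ℝ)
    (hs_supp : ∀ (i : Fin N) (y : ℝ), ψ i y ≠ 0 → s y = m i)
    (hs_range : ∀ y ∈ Icc a b, ∃ i, s y = m i)
    (f : ℝ → ℂ) (hfmeas : Measurable f) (hfbd : ∃ B : ℝ, ∀ y, ‖f y‖ ≤ B)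
    (hf_ne : ¬ (f =ᵐ[volume.restrict (Icc a b)] 0))
    (lam : ℂ) (hne : ∀ i : Fin N, lam ≠ -(m i : ℂ))
    (heig : ∀ y ∈ Icc a b, lam * f y =
      (α : ℂ) * (∫ u in Icc a b,
        (∑ i : Fin N, ∑ j : Fin N, k (t i) (t j) * ψ i y * ψ j u) * f u)
      - (s y : ℂ) * f y) :
    (fun j : Fin N => ∫ u in Icc a b, ψ j u * f u) ≠ 0 ∧
    ∀ i : Fin N, lam * (∫ u in Icc a b, ψ i u * f u) =
      (α : ℂ) * (∑ j : Fin N, (k (t i) (t j) * (∫ y in Icc a b, (ψ i y) ^ 2)) *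
        (∫ u in Icc a b, ψ j u * f u))
      - (m i : ℂ) * (∫ u in Icc a b, ψ i u * f u) := by
  have hψf j : IntegrableOn (fun u => ψ j u * f u) (Icc a b) :=
    integrable_mul_of_bounded (hψmeas j) hfmeas (hψbd j) hfbd
  have hψψ i p : IntegrableOn (fun y => ψ i y * ψ p y) (Icc a b) :=
    integrable_mul_of_bounded (hψmeas i) (hψmeas p) (hψbd i) (hψbd p)
  set c : Fin N → ℂ := fun j => ∫ u in Icc a b, ψ j u * f u
  have hgalerkin : ∀ᵐ y ∂volume.restrict (Icc a b), lam * f y =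
      α * ∑ p, (∑ j, k (t p) (t j) * c j) * ψ p y - s y * f y :=
    ae_restrict_of_forall_mem measurableSet_Icc fun y hy => by
      rw [heig y hy, integral_degenerate_kernel_mul _ _ _ _ hψf]
  refine ⟨fun hc => hf_ne ?_, fun i => ?_⟩
  · have hlam : ∀ᵐ y ∂volume.restrict (Icc a b), lam + s y ≠ 0 :=
      ae_restrict_of_forall_mem measurableSet_Icc fun y hy => by
        obtain ⟨i, hi⟩ := hs_range y hy
        rw [hi]
        exact fun h => hne i (eq_neg_of_add_eq_zero_left h)
    filter_upwards [hgalerkin, hlam] with y hy hy_ne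
    simp only [show c = 0 from hc, Pi.zero_apply, mul_zero, Finset.sum_const_zero, zero_mul] at hy
    exact (mul_eq_zero.mp (by linear_combination hy : (lam + s y) * f y = 0)).resolve_left hy_ne
  · rw [integral_mul_eq_of_eigen_eq ψ _ f (fun y => (s y : ℂ)) lam α (m i) i (hψψ i) (hψf i)
      (horth i) (fun y hy => congrArg _ (hs_supp i y hy)) hgalerkin, Finset.sum_mul]
    simp only [c, mul_right_comm _ (∫ y in Icc a b, ψ i y ^ 2)]

/-- If `f` is an eigenfunction of `A_N = K_N − M_N` with eigenvalue
`λ ∉ {−m_1,…,−m_N}`, then the vector `c` with `c_j = ∫ ψ_j f` is nonzero and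
satisfies `λ c_i = α Σ_j k_{i,j} c_j − m_i c_i`, where
`k_{i,j} = k(t_i,t_j) ∫ ψ_i²`. -/
theorem eigenfunction_gives_matrix_eigenvector (a b : ℝ) (hab : a < b) (N : ℕ) (α : ℝ)
    (ψ : Fin N → ℝ → ℂ) (hψmeas : ∀ i, Measurable (ψ i))
    (hψbd : ∀ i, ∃ B : ℝ, ∀ y, ‖ψ i y‖ ≤ B)
    (horth : ∀ i p : Fin N, i ≠ p → ∫ y in Icc a b, ψ i y * ψ p y = 0)
    (t : Fin N → ℝ) (k : ℝ → ℝ → ℂ) (m : Fin N → ℝ) (s : ℝ → ℝ)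
    (hs_supp : ∀ (i : Fin N) (y : ℝ), ψ i y ≠ 0 → s y = m i)
    (hs_range : ∀ y ∈ Icc a b, ∃ i, s y = m i)
    (f : ℝ → ℂ) (hfmeas : Measurable f) (hfbd : ∃ B : ℝ, ∀ y, ‖f y‖ ≤ B)
    (hf_ne : ¬ (f =ᵐ[volume.restrict (Icc a b)] 0))
    (lam : ℂ) (hne : ∀ i : Fin N, lam ≠ -(m i : ℂ))
    (heig : ∀ y ∈ Icc a b, lam * f y =
      (α : ℂ) * (∫ u in Icc a b,
        (∑ i : Fin N, ∑ j : Fin N, k (t i) (t j) * ψ i y * ψ j u) * f u)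
      - (s y : ℂ) * f y) :
    (fun j : Fin N => ∫ u in Icc a b, ψ j u * f u) ≠ 0 ∧
    ∀ i : Fin N, lam * (∫ u in Icc a b, ψ i u * f u) =
      (α : ℂ) * (∑ j : Fin N, (k (t i) (t j) * (∫ y in Icc a b, (ψ i y) ^ 2)) *
        (∫ u in Icc a b, ψ j u * f u))
      - (m i : ℂ) * (∫ u in Icc a b, ψ i u * f u) :=
  eigenfunction_gives_matrix_eigenvector_general a b N α ψ hψmeas hψbd horth t k m s hs_supp
    hs_range f hfmeas hfbd hf_ne lam hne heig
end

section
/- Let T and T_n be bounded linear operators on a Banach space Y with ‖T_n − T‖ → 0. Let λ be an isolated point of σ(T), and 0 < ε < dist(λ, σ(T)∖{λ}). Then for all sufficiently large n, the set Λ_n = {λ_n ∈ σ(T_n) : |λ_n − λ| < ε} is nonempty, and any sequence λ_n ∈ Λ_n converges to λ. -/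
/-!
Convergence comes from upper hemicontinuity of the spectrum: for `b` near `T`, `σ(b)` lies in
the neighbourhood `ball λ δ ∪ (closedBall λ ε)ᶜ` of `σ(T)`.

For nonemptiness, compactness of the circle `|z - λ| = ε`, which lies in `ρ(T)`, bounds the
resolvent of every `b` near `T` on that circle by one constant `M`. If `σ(b)` missed the disc,
the maximum modulus principle would give `‖(λ - b)⁻¹‖ ≤ M`, and then `λ - T`, at distance
`‖b - T‖ < M⁻¹` from `λ - b`, would be invertible.
-/

open Filter Topology Metric

theorem IsUnit.of_norm_sub_mul_norm_inverse_lt {R : Type*} [NormedRing R] [HasSummableGeomSeries R]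
    {a b : R} (ha : IsUnit a) (h : ‖b - a‖ * ‖Ring.inverse a‖ < 1) : IsUnit b := by
  nontriviality R
  obtain ⟨u, rfl⟩ := ha
  have hu : 0 < ‖(↑u⁻¹ : R)‖ := Units.norm_pos u⁻¹
  rw [Ring.inverse_unit] at h
  exact (u.ofNearby b (lt_of_mul_lt_mul_right (by rwa [inv_mul_cancel₀ hu.ne']) hu.le)).isUnit

namespace spectrum

section NormedField

variable {𝕜 A : Type*} [NormedField 𝕜] [NormedRing A] [NormedAlgebra 𝕜 A] [CompleteSpace A]

theorem continuousAt_resolvent_uncurry {a : A} {z : 𝕜} (hz : z ∈ resolventSet 𝕜 a) :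
    ContinuousAt (fun p : A × 𝕜 => resolvent p.1 p.2) (a, z) := by
  have hunit := mem_resolventSet_iff.mp hz
  have hinv := NormedRing.inverse_continuousAt hunit.unit
  rw [hunit.unit_spec] at hinv
  exact hinv.comp (f := fun p : A × 𝕜 => algebraMap 𝕜 A p.2 - p.1)
    (((continuous_algebraMap 𝕜 A).comp continuous_snd).sub continuous_fst).continuousAt

theorem eventually_mem_resolventSet {a : A} {z : 𝕜} (hz : z ∈ resolventSet 𝕜 a) :
    ∀ᶠ p : A × 𝕜 in 𝓝 (a, z), p.2 ∈ resolventSet 𝕜 p.1 :=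
  (((continuous_algebraMap 𝕜 A).comp continuous_snd).sub continuous_fst).continuousAt
    |>.preimage_mem_nhds (Units.isOpen.mem_nhds (mem_resolventSet_iff.mp hz))

theorem _root_.IsCompact.exists_eventually_forall_norm_resolvent_le {a : A}
    {K : Set 𝕜} (hK : IsCompact K) (hKa : K ⊆ resolventSet 𝕜 a) :
    ∃ M, ∀ᶠ b in 𝓝 a, ∀ z ∈ K, z ∈ resolventSet 𝕜 b ∧ ‖resolvent b z‖ ≤ M := by
  obtain ⟨C, hC⟩ := hK.exists_bound_of_continuousOn fun z hz =>
    ((continuousAt_resolvent_uncurry (hKa hz)).comp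
      (Continuous.prodMk_right a).continuousAt).continuousWithinAt
  refine ⟨C + 1, hK.eventually_forall_of_forall_eventually fun z hz => ?_⟩
  have hnorm : ∀ᶠ p : A × 𝕜 in 𝓝 (a, z), ‖resolvent p.1 p.2‖ < C + 1 :=
    (continuousAt_resolvent_uncurry (hKa hz)).norm.eventually
      (gt_mem_nhds ((hC z hz).trans_lt (lt_add_one C)))
  filter_upwards [eventually_mem_resolventSet (hKa hz), hnorm] with p hp hpM
  exact ⟨hp, hpM.le⟩

theorem eventually_inter_ball_subset_ball [ProperSpace 𝕜] {a : A} {c : 𝕜} {r δ : ℝ}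
    (hδ : 0 < δ) (hiso : spectrum 𝕜 a ∩ closedBall c r ⊆ {c}) :
    ∀ᶠ b in 𝓝 a, spectrum 𝕜 b ∩ ball c r ⊆ ball c δ := by
  have hU : ball c δ ∪ (closedBall c r)ᶜ ∈ 𝓝ˢ (spectrum 𝕜 a) := by
    refine (isOpen_ball.union isClosed_closedBall.isOpen_compl).mem_nhdsSet.mpr fun z hz => ?_
    by_cases hzr : z ∈ closedBall c r
    · exact Or.inl ((hiso ⟨hz, hzr⟩).symm ▸ mem_ball_self hδ)
    · exact Or.inr hzr
  filter_upwards [upperHemicontinuous_spectrum 𝕜 A a _ hU] with b hb z ⟨hzσ, hzr⟩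
  exact (subset_of_mem_nhdsSet hb hzσ).resolve_right (not_not.mpr (ball_subset_closedBall hzr))

end NormedField

section Complex

variable {A : Type*} [NormedRing A] [NormedAlgebra ℂ A] [CompleteSpace A]

theorem norm_resolvent_le_of_forall_mem_sphere {a : A} {c : ℂ} {r : ℝ} (hr : 0 < r)
    (hρ : closedBall c r ⊆ resolventSet ℂ a) {M : ℝ}
    (hM : ∀ z ∈ sphere c r, ‖resolvent a z‖ ≤ M) {w : ℂ} (hw : w ∈ closedBall c r) :
    ‖resolvent a w‖ ≤ M := by
  have hdiff : DiffContOnCl ℂ (resolvent a) (ball c r) := by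
    refine DifferentiableOn.diffContOnCl fun z hz => ?_
    rw [closure_ball c hr.ne'] at hz
    exact (hasDerivAt_resolvent_const_left (hρ hz)).differentiableAt.differentiableWithinAt
  refine Complex.norm_le_of_forall_mem_frontier_norm_le isBounded_ball hdiff ?_ ?_
  · rwa [frontier_ball c hr.ne']
  · rwa [closure_ball c hr.ne']

theorem eventually_inter_ball_nonempty {a : A} {c : ℂ} {r : ℝ} (hr : 0 < r)
    (hne : (spectrum ℂ a ∩ ball c r).Nonempty) (hsphere : sphere c r ⊆ resolventSet ℂ a) :
    ∀ᶠ b in 𝓝 a, (spectrum ℂ b ∩ ball c r).Nonempty := by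
  obtain ⟨M, hM⟩ := (isCompact_sphere c r).exists_eventually_forall_norm_resolvent_le hsphere
  have hclose : ∀ᶠ b in 𝓝 a, ‖b - a‖ * M < 1 :=
    ((tendsto_iff_norm_sub_tendsto_zero.mp tendsto_id).mul_const M).eventually_lt_const
      (by rw [zero_mul]; exact one_pos)
  obtain ⟨w, hwσ, hwr⟩ := hne
  filter_upwards [hM, hclose] with b hbM hbclose
  by_contra hempty
  have hρ : closedBall c r ⊆ resolventSet ℂ b := by
    intro z hz
    rcases (mem_closedBall.mp hz).eq_or_lt with hzr | hzr
    · exact (hbM z hzr).1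
    · exact mem_resolventSet_iff.mpr (notMem_iff.mp fun hzσ => hempty ⟨z, hzσ, hzr⟩)
  have hbound := norm_resolvent_le_of_forall_mem_sphere hr hρ (fun z hz => (hbM z hz).2)
    (ball_subset_closedBall hwr)
  refine hwσ (IsUnit.of_norm_sub_mul_norm_inverse_lt (mem_resolventSet_iff.mp
    (hρ (ball_subset_closedBall hwr))) ?_)
  calc ‖(algebraMap ℂ A w - a) - (algebraMap ℂ A w - b)‖ * ‖resolvent b w‖
      ≤ ‖b - a‖ * M := by
        rw [sub_sub_sub_cancel_left]
        exact mul_le_mul_of_nonneg_left hbound (norm_nonneg _)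
    _ < 1 := hbclose

end Complex

end spectrum

theorem spectral_approximation_general (Y : Type*) [NormedAddCommGroup Y] [NormedSpace ℂ Y]
    [CompleteSpace Y] (T : Y →L[ℂ] Y) (Tn : ℕ → (Y →L[ℂ] Y))
    (hconv : Tendsto (fun n => ‖Tn n - T‖) atTop (𝓝 0))
    (lam : ℂ) (hlam : lam ∈ spectrum ℂ T)
    (ε : ℝ) (hε : 0 < ε)
    (hεlt : ENNReal.ofReal ε < EMetric.infEdist lam (spectrum ℂ T \ {lam})) :
    (∀ᶠ n in atTop, ∃ z ∈ spectrum ℂ (Tn n), ‖z - lam‖ < ε) ∧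
    ∀ seq : ℕ → ℂ,
      (∀ᶠ n in atTop, seq n ∈ spectrum ℂ (Tn n) ∧ ‖seq n - lam‖ < ε) →
      Tendsto seq atTop (𝓝 lam) := by
  have hTn : Tendsto Tn atTop (𝓝 T) := tendsto_iff_norm_sub_tendsto_zero.mpr hconv
  have hiso : spectrum ℂ T ∩ closedBall lam ε ⊆ {lam} := by
    have hdisj := Metric.disjoint_closedEBall_of_lt_infEDist hεlt
    rw [Metric.closedEBall_ofReal hε.le] at hdisj
    exact fun z ⟨hzσ, hzε⟩ => by_contra fun hz => hdisj.le_bot ⟨hzε, hzσ, hz⟩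
  have hsphere : sphere lam ε ⊆ resolventSet ℂ T := by
    intro z hz
    refine spectrum.mem_resolventSet_iff.mpr (spectrum.notMem_iff.mp fun hzσ => ?_)
    have hzlam : z = lam := hiso ⟨hzσ, sphere_subset_closedBall hz⟩
    exact hε.ne (by simpa [hzlam] using hz)
  refine ⟨?_, fun seq hseq => Metric.tendsto_nhds.mpr fun δ hδ => ?_⟩
  · filter_upwards [hTn.eventually (spectrum.eventually_inter_ball_nonempty hε
      ⟨lam, hlam, mem_ball_self hε⟩ hsphere)] with n ⟨z, hzσ, hzε⟩
    exact ⟨z, hzσ, mem_ball_iff_norm.mp hzε⟩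
  · filter_upwards [hTn.eventually (spectrum.eventually_inter_ball_subset_ball hδ hiso), hseq]
      with n hn ⟨hσ, hlt⟩
    exact hn ⟨hσ, mem_ball_iff_norm.mpr hlt⟩

/-- (Spectral approximation.)  Let `T`, `T_n` be bounded operators on a complex Banach
space with `‖T_n − T‖ → 0`, let `λ` be an isolated point of `σ(T)` and
`0 < ε < dist(λ, σ(T)∖{λ})`.  Then for all large `n` the set
`Λ_n = {z ∈ σ(T_n) : |z − λ| < ε}` is nonempty, and any sequence `λ_n ∈ Λ_n`
converges to `λ`. -/
theorem spectral_approximation (Y : Type*) [NormedAddCommGroup Y] [NormedSpace ℂ Y]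
    [CompleteSpace Y] (T : Y →L[ℂ] Y) (Tn : ℕ → (Y →L[ℂ] Y))
    (hconv : Tendsto (fun n => ‖Tn n - T‖) atTop (𝓝 0))
    (lam : ℂ) (hlam : lam ∈ spectrum ℂ T)
    (hiso : 𝓝[spectrum ℂ T \ {lam}] lam = ⊥)
    (ε : ℝ) (hε : 0 < ε)
    (hεlt : ENNReal.ofReal ε < EMetric.infEdist lam (spectrum ℂ T \ {lam})) :
    (∀ᶠ n in atTop, ∃ z ∈ spectrum ℂ (Tn n), ‖z - lam‖ < ε) ∧
    ∀ seq : ℕ → ℂ,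
      (∀ᶠ n in atTop, seq n ∈ spectrum ℂ (Tn n) ∧ ‖seq n - lam‖ < ε) →
      Tendsto seq atTop (𝓝 lam) :=
  spectral_approximation_general Y T Tn hconv lam hlam ε hε hεlt
end

section
/- Let T, T_n be bounded linear operators on a Banach space with ‖T_n − T‖ → 0, and let λ be a simple isolated eigenvalue of T. Then there exists c > 0 such that for all sufficiently large n, any eigenvalue λ_n of T_n lying in a fixed small disk around λ satisfies |λ_n − λ| ≤ c ‖T_n − T‖. -/
/-!
Let `P = (2πi)⁻¹ ∮ (z - T)⁻¹ dz` be the Riesz projection of `T` at `λ`. It commutes with `T` and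
has rank one, so `T P = μ P` for some `μ`. The moments
`(T - λ)ᵐ P = (2πi)⁻¹ ∮ (z - λ)ᵐ (z - T)⁻¹ dz` grow at most like `ρᵐ`, so `|μ - λ| ≤ ρ`; as
`μ ∈ σ(T)`, isolation forces `μ = λ`. Then `P² = P`, and with the reduced resolvent
`S = (2πi)⁻¹ ∮ (z - λ)⁻¹ (z - T)⁻¹ dz` one checks that `S + P` inverts `λ - T + P`. Hence
`(w - T)⁻¹ = (w - λ)⁻¹ P + (w - T + P)⁻¹ (1 - P)` near `λ`, so `λ` is a simple pole of the
resolvent: `‖(w - T)⁻¹‖ ≤ C / |w - λ|`. Finally, for `w ∈ σ(Tₙ)` the factorisation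
`w - Tₙ = (w - T)(1 - (w - T)⁻¹(Tₙ - T))` shows `1 ≤ ‖(w - T)⁻¹‖ ‖Tₙ - T‖`.
-/

open Filter Topology MeasureTheory Metric

theorem Commute.ringInverse_right {M₀ : Type*} [MonoidWithZero M₀] {a b : M₀}
    (h : Commute a b) : Commute a (Ring.inverse b) := by
  by_cases hb : IsUnit b
  · obtain ⟨u, rfl⟩ := hb
    rw [Ring.inverse_unit]
    exact h.units_inv_right
  · rw [Ring.inverse_non_unit b hb]
    exact Commute.zero_right a

theorem le_of_forall_pow_le_mul_pow {x y C : ℝ} (hy : 0 < y) (h : ∀ n : ℕ, x ^ n ≤ C * y ^ n) :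
    x ≤ y := by
  by_contra! hxy
  obtain ⟨n, hn⟩ := pow_unbounded_of_one_lt C ((one_lt_div hy).2 hxy)
  rw [div_pow, lt_div_iff₀ (pow_pos hy n)] at hn
  exact (h n).not_gt hn

theorem pow_mul_eq_pow_smul_of_mul_eq_smul {R A : Type*} [CommSemiring R] [Semiring A]
    [Algebra R A] {x p : A} {c : R} (h : x * p = c • p) (n : ℕ) : x ^ n * p = c ^ n • p := by
  induction n with
  | zero => simp
  | succ n ih => rw [pow_succ', mul_assoc, ih, mul_smul_comm, h, smul_smul, pow_succ]

theorem Module.End.exists_mul_eq_smul_of_rank_range_eq_one {K V : Type*} [Field K]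
    [AddCommGroup V] [Module K V] {P T : Module.End K V}
    (hP : Module.rank K (LinearMap.range P) = 1) (hTP : Commute T P) :
    ∃ μ : K, T * P = μ • P := by
  obtain ⟨v, -, hv⟩ := rank_eq_one_iff.mp hP
  have hTv : T v ∈ LinearMap.range P := by
    obtain ⟨x, hx⟩ := v.2
    exact ⟨T x, by rw [← hx, ← Module.End.mul_apply, ← hTP.eq, Module.End.mul_apply]⟩
  obtain ⟨μ, hμ⟩ := hv ⟨T v, hTv⟩
  refine ⟨μ, LinearMap.ext fun x => ?_⟩
  obtain ⟨c, hc⟩ := hv ⟨P x, LinearMap.mem_range_self P x⟩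
  have hc' : c • (v : V) = P x := congrArg Subtype.val hc
  have hμ' : μ • (v : V) = T v := congrArg Subtype.val hμ
  rw [Module.End.mul_apply, LinearMap.smul_apply, ← hc', map_smul, ← hμ', smul_comm]

section CircleIntegral

variable {A : Type*} [NormedRing A] [NormedAlgebra ℂ A] [CompleteSpace A] {f : ℂ → A} {c : ℂ}
  {R : ℝ}

theorem circleIntegral.integral_const_mul_of_circleIntegrable (b : A)
    (hf : CircleIntegrable f c R) : ∮ z in C(c, R), b * f z = b * ∮ z in C(c, R), f z := by
  simp only [circleIntegral, ← mul_smul_comm]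
  exact (ContinuousLinearMap.mul ℂ A b).intervalIntegral_comp_comm hf.out

theorem circleIntegral.integral_mul_const_of_circleIntegrable (b : A)
    (hf : CircleIntegrable f c R) : ∮ z in C(c, R), f z * b = (∮ z in C(c, R), f z) * b := by
  simp only [circleIntegral, ← smul_mul_assoc]
  exact ((ContinuousLinearMap.mul ℂ A).flip b).intervalIntegral_comp_comm hf.out

theorem commute_circleIntegral {b : A} (hR : 0 ≤ R) (hf : CircleIntegrable f c R)
    (h : ∀ z ∈ sphere c R, Commute b (f z)) : Commute b (∮ z in C(c, R), f z) := by
  rw [Commute, SemiconjBy, ← circleIntegral.integral_const_mul_of_circleIntegrable b hf,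
    ← circleIntegral.integral_mul_const_of_circleIntegrable b hf]
  exact circleIntegral.integral_congr hR fun z hz => (h z hz).eq

end CircleIntegral

section ResolventAlgebra

variable {R 𝕜 A : Type*} [CommRing R] [Field 𝕜] [Ring A] {a b p : A}

theorem Commute.resolvent_right [Algebra R A] (h : Commute b a) (r : R) :
    Commute b (resolvent a r) :=
  ((Algebra.commute_algebraMap_right r b).sub_right h).ringInverse_right

theorem sub_smul_resolvent [Algebra R A] {r : R} (hr : r ∈ resolventSet R a) (s : R) :
    (r - s) • resolvent a r = 1 + (a - algebraMap R A s) * resolvent a r := by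
  have hsplit : algebraMap R A (r - s) = (algebraMap R A r - a) + (a - algebraMap R A s) := by
    rw [map_sub]; abel
  rw [Algebra.smul_def, hsplit, add_mul, resolvent, Ring.mul_inverse_cancel _ hr]

theorem algebraMap_sub_mul_eq_smul [Algebra R A] {r : R} (hp : a * p = r • p) (s : R) :
    (algebraMap R A s - a) * p = (s - r) • p := by
  rw [sub_mul, hp, ← Algebra.smul_def, sub_smul]

variable [Algebra 𝕜 A] {z μ : 𝕜}

theorem resolvent_mul_eq_inv_smul (hp : a * p = μ • p) (hz : z ∈ resolventSet 𝕜 a) :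
    resolvent a z * p = (z - μ)⁻¹ • p := by
  have hp' : p = (z - μ) • (resolvent a z * p) := by
    calc p = resolvent a z * ((algebraMap 𝕜 A z - a) * p) := by
          rw [← mul_assoc, resolvent, Ring.inverse_mul_cancel _ hz, one_mul]
      _ = (z - μ) • (resolvent a z * p) := by
          rw [algebraMap_sub_mul_eq_smul hp, mul_smul_comm]
  rcases eq_or_ne z μ with rfl | hzμ
  · rw [sub_self, zero_smul] at hp'
    rw [hp', mul_zero, smul_zero]
  · conv_rhs => rw [hp']
    rw [inv_smul_smul₀ (sub_ne_zero.2 hzμ)]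

theorem mem_spectrum_of_mul_eq_smul (hp : a * p = μ • p) (hp0 : p ≠ 0) : μ ∈ spectrum 𝕜 a := by
  rw [spectrum.mem_iff]
  intro hμ
  apply hp0
  rw [← hμ.mul_right_eq_zero, algebraMap_sub_mul_eq_smul hp, sub_self, zero_smul]

end ResolventAlgebra

theorem sphere_subset_resolventSet {𝕜 A : Type*} [NormedField 𝕜] [Ring A] [Algebra 𝕜 A] {a : A}
    {lam : 𝕜} {ρ : ℝ} (hρ : 0 < ρ) (hspec : spectrum 𝕜 a ∩ closedBall lam ρ = {lam}) :
    sphere lam ρ ⊆ resolventSet 𝕜 a := by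
  intro z hz
  by_contra hzs
  have hzlam : z ∈ spectrum 𝕜 a ∩ closedBall lam ρ := ⟨hzs, sphere_subset_closedBall hz⟩
  rw [hspec, Set.mem_singleton_iff] at hzlam
  rw [mem_sphere, hzlam, dist_self] at hz
  exact hρ.ne hz

section ResolventAnalysis

variable {R 𝕜 A : Type*} [CommRing R] [NontriviallyNormedField 𝕜] [NormedRing A] [CompleteSpace A]
  {a b : A}

theorem continuousOn_resolvent [NormedAlgebra 𝕜 A] (a : A) :
    ContinuousOn (resolvent a) (resolventSet 𝕜 a) :=
  fun _ hz => (spectrum.hasDerivAt_resolvent_const_left hz).continuousAt.continuousWithinAt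

theorem one_le_norm_resolvent_mul_norm_sub [Algebra R A] {r : R} (ha : r ∈ resolventSet R a)
    (hb : r ∈ spectrum R b) : 1 ≤ ‖resolvent a r‖ * ‖b - a‖ := by
  by_contra! h
  have hsmall : ‖resolvent a r * (b - a)‖ < 1 := (norm_mul_le _ _).trans_lt h
  have hfactor : algebraMap R A r - b
      = (algebraMap R A r - a) * (1 - resolvent a r * (b - a)) := by
    rw [mul_sub, mul_one, ← mul_assoc, resolvent, Ring.mul_inverse_cancel _ ha, one_mul]
    abel
  apply hb
  rw [spectrum.mem_resolventSet_iff, hfactor]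
  exact ha.mul (isUnit_one_sub_of_norm_lt_one hsmall)

end ResolventAnalysis

section SimplePole

variable {𝕜 A : Type*} [Field 𝕜] [Ring A] [Algebra 𝕜 A] {a p : A} {lam w : 𝕜}

theorem mem_resolventSet_and_resolvent_eq_of_isIdempotentElem (hp : IsIdempotentElem p)
    (hap : Commute a p) (hlam : a * p = lam • p) (hu : IsUnit (algebraMap 𝕜 A w - a + p))
    (hw : w ≠ lam) :
    w ∈ resolventSet 𝕜 a ∧
      resolvent a w = (w - lam)⁻¹ • p + Ring.inverse (algebraMap 𝕜 A w - a + p) * (1 - p) := by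
  set u := algebraMap 𝕜 A w - a + p
  set q := Ring.inverse u
  set x := (w - lam)⁻¹ • p + q * (1 - p)
  have hcomm : Commute (algebraMap 𝕜 A w - a) p :=
    (Algebra.commute_algebraMap_left w p).sub_left hap
  have hpq : Commute p q := (hcomm.symm.add_right (Commute.refl p)).ringInverse_right
  have hx : Commute (algebraMap 𝕜 A w - a) x :=
    (hcomm.smul_right _).add_right (((Commute.refl _).add_right hcomm).ringInverse_right.mul_right
      ((Commute.one_right _).sub_right hcomm))
  have hp_part : (algebraMap 𝕜 A w - a) * ((w - lam)⁻¹ • p) = p := by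
    rw [mul_smul_comm, algebraMap_sub_mul_eq_smul hlam, smul_smul,
      inv_mul_cancel₀ (sub_ne_zero.2 hw), one_smul]
  have hq_part : (algebraMap 𝕜 A w - a) * (q * (1 - p)) = 1 - p := by
    rw [← mul_assoc, ← add_sub_cancel_right (algebraMap 𝕜 A w - a) p, sub_mul,
      Ring.mul_inverse_cancel _ hu, sub_mul, one_mul, hpq.eq, mul_assoc, mul_sub, mul_one, hp.eq,
      sub_self, mul_zero, sub_zero]
  have hmul : (algebraMap 𝕜 A w - a) * x = 1 := by
    rw [mul_add, hp_part, hq_part, add_sub_cancel]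
  let v : Aˣ := ⟨algebraMap 𝕜 A w - a, x, hmul, hx.eq ▸ hmul⟩
  exact ⟨⟨v, rfl⟩, Ring.inverse_unit v⟩

end SimplePole

section SimplePoleBound

variable {𝕜 A : Type*} [NontriviallyNormedField 𝕜] [NormedRing A] [NormedAlgebra 𝕜 A]
  [CompleteSpace A] {a p : A} {lam : 𝕜}

theorem exists_norm_resolvent_le_div (hp : IsIdempotentElem p) (hap : Commute a p)
    (hlam : a * p = lam • p) (hu : IsUnit (algebraMap 𝕜 A lam - a + p)) :
    ∃ C > (0 : ℝ), ∃ δ > (0 : ℝ), ∀ w : 𝕜, w ≠ lam → ‖w - lam‖ < δ →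
      w ∈ resolventSet 𝕜 a ∧ ‖resolvent a w‖ ≤ C / ‖w - lam‖ := by
  set g : 𝕜 → A := fun w => algebraMap 𝕜 A w - a + p
  have hg : Continuous g := by fun_prop
  set K := ‖Ring.inverse (g lam)‖ + 1
  have hev : ∀ᶠ w in 𝓝 lam, IsUnit (g w) ∧ ‖Ring.inverse (g w)‖ < K := by
    have hglam : g lam = hu.unit := hu.unit_spec.symm
    have hinv : ContinuousAt Ring.inverse (g lam) := hglam ▸ NormedRing.inverse_continuousAt hu.unit
    exact (hg.continuousAt.eventually_mem (hglam ▸ Units.nhds hu.unit)).and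
      ((hinv.comp hg.continuousAt).norm.eventually (gt_mem_nhds (lt_add_one _)))
  obtain ⟨δ, hδ, hδev⟩ := Metric.eventually_nhds_iff.1 hev
  refine ⟨‖p‖ + K * ‖1 - p‖ + 1, by positivity, min δ 1, lt_min hδ one_pos, fun w hw hwδ => ?_⟩
  obtain ⟨hgw, hgwK⟩ := hδev (by rw [dist_eq_norm]; exact hwδ.trans_le (min_le_left _ _))
  obtain ⟨hres, hformula⟩ :=
    mem_resolventSet_and_resolvent_eq_of_isIdempotentElem hp hap hlam hgw hw
  have hd : 0 < ‖w - lam‖ := norm_pos_iff.2 (sub_ne_zero.2 hw)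
  have hd1 : ‖w - lam‖ ≤ 1 := (hwδ.trans_le (min_le_right _ _)).le
  refine ⟨hres, ?_⟩
  calc ‖resolvent a w‖ ≤ ‖p‖ / ‖w - lam‖ + K * ‖1 - p‖ := by
        rw [hformula]
        refine (norm_add_le _ _).trans (add_le_add (le_of_eq ?_) ?_)
        · rw [norm_smul, norm_inv, inv_mul_eq_div]
        · exact (norm_mul_le _ _).trans (mul_le_mul_of_nonneg_right hgwK.le (norm_nonneg _))
    _ ≤ ‖p‖ / ‖w - lam‖ + K * ‖1 - p‖ / ‖w - lam‖ := by
        gcongr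
        exact le_div_self (by positivity) hd hd1
    _ ≤ (‖p‖ + K * ‖1 - p‖ + 1) / ‖w - lam‖ := by
        rw [← add_div]
        exact div_le_div_of_nonneg_right (by linarith) hd.le

end SimplePoleBound

section RieszProjection

variable {A : Type*} [NormedRing A] [NormedAlgebra ℂ A] [CompleteSpace A] {a : A} {lam μ : ℂ}
  {ρ : ℝ}

noncomputable def rieszProjection (a : A) (lam : ℂ) (ρ : ℝ) : A :=
  (2 * Real.pi * Complex.I)⁻¹ • ∮ z in C(lam, ρ), resolvent a z

/-- Minus Kato's reduced resolvent (`resolvent a z` is `(z - a)⁻¹`), so that `(λ - a) S = 1 - P`. -/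
noncomputable def reducedResolvent (a : A) (lam : ℂ) (ρ : ℝ) : A :=
  (2 * Real.pi * Complex.I)⁻¹ • ∮ z in C(lam, ρ), (z - lam)⁻¹ • resolvent a z

theorem continuousOn_sub_inv_sphere (hρ : 0 < ρ) :
    ContinuousOn (fun z : ℂ => (z - lam)⁻¹) (sphere lam ρ) :=
  (continuousOn_id.sub continuousOn_const).inv₀ fun _ hz =>
    sub_ne_zero.2 (ne_of_mem_sphere hz hρ.ne')

theorem circleIntegrable_resolvent (hρ : 0 ≤ ρ) (hsphere : sphere lam ρ ⊆ resolventSet ℂ a) :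
    CircleIntegrable (resolvent a) lam ρ :=
  ((continuousOn_resolvent a).mono hsphere).circleIntegrable hρ

theorem Commute.rieszProjection_right {b : A} (hρ : 0 ≤ ρ)
    (hsphere : sphere lam ρ ⊆ resolventSet ℂ a) (hb : Commute b a) :
    Commute b (rieszProjection a lam ρ) :=
  (commute_circleIntegral hρ (circleIntegrable_resolvent hρ hsphere)
    fun z _ => hb.resolvent_right z).smul_right _

theorem circleIntegral_sub_pow_smul_resolvent (hρ : 0 ≤ ρ)
    (hsphere : sphere lam ρ ⊆ resolventSet ℂ a) (m : ℕ) :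
    ∮ z in C(lam, ρ), (z - lam) ^ m • resolvent a z
      = (a - algebraMap ℂ A lam) ^ m * ∮ z in C(lam, ρ), resolvent a z := by
  induction m with
  | zero => simp only [pow_zero, one_smul, one_mul]
  | succ m ih =>
    have hpoint : Set.EqOn (fun z => (z - lam) ^ (m + 1) • resolvent a z)
        (fun z => (z - lam) ^ m • (1 : A)
          + (a - algebraMap ℂ A lam) * ((z - lam) ^ m • resolvent a z)) (sphere lam ρ) :=
      fun z hz => by
        beta_reduce
        rw [pow_succ, mul_smul, sub_smul_resolvent (hsphere hz), smul_add, mul_smul_comm]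
    have hpow : ContinuousOn (fun z : ℂ => (z - lam) ^ m) (sphere lam ρ) := by fun_prop
    have hconst : CircleIntegrable (fun z => (z - lam) ^ m • (1 : A)) lam ρ :=
      (hpow.smul continuousOn_const).circleIntegrable hρ
    have hmoment : ContinuousOn (fun z => (z - lam) ^ m • resolvent a z) (sphere lam ρ) :=
      hpow.smul ((continuousOn_resolvent a).mono hsphere)
    have hzero : ∮ z in C(lam, ρ), (z - lam) ^ m = 0 := by
      simpa using circleIntegral.integral_sub_zpow_of_ne (n := m) (by omega) lam lam ρ
    have hmul : CircleIntegrable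
        (fun z => (a - algebraMap ℂ A lam) * ((z - lam) ^ m • resolvent a z)) lam ρ :=
      (continuousOn_const.mul hmoment).circleIntegrable hρ
    rw [circleIntegral.integral_congr hρ hpoint, circleIntegral.integral_add hconst hmul,
      circleIntegral.integral_smul_const, hzero, zero_smul, zero_add,
      circleIntegral.integral_const_mul_of_circleIntegrable _ (hmoment.circleIntegrable hρ), ih,
      ← mul_assoc, ← pow_succ']

theorem exists_norm_sub_pow_mul_rieszProjection_le (hρ : 0 < ρ)
    (hsphere : sphere lam ρ ⊆ resolventSet ℂ a) :
    ∃ M, ∀ m : ℕ, ‖(a - algebraMap ℂ A lam) ^ m * rieszProjection a lam ρ‖ ≤ M * ρ ^ m := by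
  obtain ⟨K, hK⟩ :=
    (isCompact_sphere lam ρ).exists_bound_of_continuousOn ((continuousOn_resolvent a).mono hsphere)
  refine ⟨ρ * K, fun m => ?_⟩
  rw [rieszProjection, mul_smul_comm, ← circleIntegral_sub_pow_smul_resolvent hρ.le hsphere]
  refine (circleIntegral.norm_two_pi_i_inv_smul_integral_le_of_norm_le_const hρ.le
    (C := ρ ^ m * K) fun z hz => ?_).trans_eq (by ring)
  rw [norm_smul, norm_pow, mem_sphere_iff_norm.1 hz]
  exact mul_le_mul_of_nonneg_left (hK z hz) (by positivity)

theorem norm_sub_le_of_mul_rieszProjection_eq_smul (hρ : 0 < ρ)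
    (hsphere : sphere lam ρ ⊆ resolventSet ℂ a)
    (hμ : a * rieszProjection a lam ρ = μ • rieszProjection a lam ρ)
    (hP : rieszProjection a lam ρ ≠ 0) : ‖μ - lam‖ ≤ ρ := by
  obtain ⟨M, hM⟩ := exists_norm_sub_pow_mul_rieszProjection_le hρ hsphere
  have hshift : (a - algebraMap ℂ A lam) * rieszProjection a lam ρ
      = (μ - lam) • rieszProjection a lam ρ := by
    rw [← neg_sub, neg_mul, algebraMap_sub_mul_eq_smul hμ, ← neg_smul, neg_sub]
  have hPpos : 0 < ‖rieszProjection a lam ρ‖ := norm_pos_iff.2 hP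
  refine le_of_forall_pow_le_mul_pow (C := M / ‖rieszProjection a lam ρ‖) hρ fun m => ?_
  have hm := hM m
  rw [pow_mul_eq_pow_smul_of_mul_eq_smul hshift, norm_smul, norm_pow] at hm
  rw [div_mul_eq_mul_div, le_div_iff₀ hPpos]
  linarith

theorem eq_of_mul_rieszProjection_eq_smul (hρ : 0 < ρ)
    (hspec : spectrum ℂ a ∩ closedBall lam ρ = {lam})
    (hμ : a * rieszProjection a lam ρ = μ • rieszProjection a lam ρ)
    (hP : rieszProjection a lam ρ ≠ 0) : μ = lam := by
  have hμmem : μ ∈ spectrum ℂ a ∩ closedBall lam ρ :=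
    ⟨mem_spectrum_of_mul_eq_smul hμ hP, mem_closedBall_iff_norm.2
      (norm_sub_le_of_mul_rieszProjection_eq_smul hρ (sphere_subset_resolventSet hρ hspec) hμ hP)⟩
  rwa [hspec, Set.mem_singleton_iff] at hμmem

theorem isIdempotentElem_rieszProjection (hρ : 0 < ρ) (hsphere : sphere lam ρ ⊆ resolventSet ℂ a)
    (hP : a * rieszProjection a lam ρ = lam • rieszProjection a lam ρ) :
    IsIdempotentElem (rieszProjection a lam ρ) := by
  nth_rewrite 1 [IsIdempotentElem, rieszProjection]
  rw [smul_mul_assoc, ← circleIntegral.integral_mul_const_of_circleIntegrable _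
    (circleIntegrable_resolvent hρ.le hsphere), circleIntegral.integral_congr hρ.le
    fun z hz => resolvent_mul_eq_inv_smul hP (hsphere hz), circleIntegral.integral_smul_const,
    circleIntegral.integral_sub_inv_of_mem_ball (mem_ball_self hρ), smul_smul,
    inv_mul_cancel₀ Complex.two_pi_I_ne_zero, one_smul]

theorem circleIntegrable_sub_inv_smul_resolvent (hρ : 0 < ρ)
    (hsphere : sphere lam ρ ⊆ resolventSet ℂ a) :
    CircleIntegrable (fun z => (z - lam)⁻¹ • resolvent a z) lam ρ :=
  ((continuousOn_sub_inv_sphere hρ).smul ((continuousOn_resolvent a).mono hsphere)).circleIntegrable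
    hρ.le

theorem algebraMap_sub_mul_reducedResolvent (hρ : 0 < ρ)
    (hsphere : sphere lam ρ ⊆ resolventSet ℂ a) :
    (algebraMap ℂ A lam - a) * reducedResolvent a lam ρ = 1 - rieszProjection a lam ρ := by
  have hpoint : Set.EqOn (fun z => (algebraMap ℂ A lam - a) * ((z - lam)⁻¹ • resolvent a z))
      (fun z => (z - lam)⁻¹ • (1 : A) - resolvent a z) (sphere lam ρ) := fun z hz => by
    beta_reduce
    have hne : z - lam ≠ 0 := sub_ne_zero.2 (ne_of_mem_sphere hz hρ.ne')
    have hleft : (algebraMap ℂ A lam - a) * resolvent a z = 1 - (z - lam) • resolvent a z := by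
      rw [sub_smul_resolvent (hsphere hz), ← neg_sub a, neg_mul]
      abel
    rw [mul_smul_comm, hleft, smul_sub, smul_smul, inv_mul_cancel₀ hne, one_smul]
  have hinv : CircleIntegrable (fun z => (z - lam)⁻¹ • (1 : A)) lam ρ :=
    ((continuousOn_sub_inv_sphere hρ).smul continuousOn_const).circleIntegrable hρ.le
  rw [reducedResolvent, mul_smul_comm, ← circleIntegral.integral_const_mul_of_circleIntegrable _
    (circleIntegrable_sub_inv_smul_resolvent hρ hsphere),
    circleIntegral.integral_congr hρ.le hpoint,
    circleIntegral.integral_sub hinv (circleIntegrable_resolvent hρ.le hsphere),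
    circleIntegral.integral_smul_const, circleIntegral.integral_sub_inv_of_mem_ball
      (mem_ball_self hρ), smul_sub, smul_smul, inv_mul_cancel₀ Complex.two_pi_I_ne_zero, one_smul,
    rieszProjection]

theorem Commute.reducedResolvent_right {b : A} (hρ : 0 < ρ)
    (hsphere : sphere lam ρ ⊆ resolventSet ℂ a) (hb : Commute b a) :
    Commute b (reducedResolvent a lam ρ) :=
  (commute_circleIntegral hρ.le (circleIntegrable_sub_inv_smul_resolvent hρ hsphere)
    fun z _ => (hb.resolvent_right z).smul_right _).smul_right _

theorem reducedResolvent_mul_rieszProjection (hρ : 0 < ρ)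
    (hsphere : sphere lam ρ ⊆ resolventSet ℂ a)
    (hP : a * rieszProjection a lam ρ = lam • rieszProjection a lam ρ) :
    reducedResolvent a lam ρ * rieszProjection a lam ρ = 0 := by
  have hpoint : Set.EqOn (fun z => ((z - lam)⁻¹ • resolvent a z) * rieszProjection a lam ρ)
      (fun z => (z - lam) ^ (-2 : ℤ) • rieszProjection a lam ρ) (sphere lam ρ) := fun z hz => by
    beta_reduce
    rw [smul_mul_assoc, resolvent_mul_eq_inv_smul hP (hsphere hz), smul_smul, ← sq, inv_pow,
      zpow_neg, zpow_ofNat]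
  rw [reducedResolvent, smul_mul_assoc, ← circleIntegral.integral_mul_const_of_circleIntegrable _
    (circleIntegrable_sub_inv_smul_resolvent hρ hsphere),
    circleIntegral.integral_congr hρ.le hpoint,
    circleIntegral.integral_smul_const, circleIntegral.integral_sub_zpow_of_ne (by decide),
    zero_smul, smul_zero]

theorem isUnit_algebraMap_sub_add_rieszProjection (hρ : 0 < ρ)
    (hsphere : sphere lam ρ ⊆ resolventSet ℂ a)
    (hP : a * rieszProjection a lam ρ = lam • rieszProjection a lam ρ) :
    IsUnit (algebraMap ℂ A lam - a + rieszProjection a lam ρ) := by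
  set P := rieszProjection a lam ρ
  set S := reducedResolvent a lam ρ
  have haP : Commute a P := (Commute.refl a).rieszProjection_right hρ.le hsphere
  have hPS : Commute P S := haP.symm.reducedResolvent_right hρ hsphere
  have haS : Commute a S := (Commute.refl a).reducedResolvent_right hρ hsphere
  have hcomm : Commute (algebraMap ℂ A lam - a + P) (S + P) :=
    (((Algebra.commute_algebraMap_left lam _).sub_left haS).add_left hPS).add_right
      (((Algebra.commute_algebraMap_left lam _).sub_left haP).add_left (Commute.refl P))
  have hlamS : (algebraMap ℂ A lam - a) * S = 1 - P :=
    algebraMap_sub_mul_reducedResolvent hρ hsphere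
  have hlamP : (algebraMap ℂ A lam - a) * P = 0 := by
    rw [algebraMap_sub_mul_eq_smul hP, sub_self, zero_smul]
  have hPS0 : P * S = 0 := hPS.eq.trans (reducedResolvent_mul_rieszProjection hρ hsphere hP)
  have hPP : P * P = P := isIdempotentElem_rieszProjection hρ hsphere hP
  have hmul : (algebraMap ℂ A lam - a + P) * (S + P) = 1 := by
    rw [add_mul, mul_add, mul_add, hlamS, hlamP, hPS0, hPP]
    abel
  exact ⟨⟨_, S + P, hmul, hcomm.eq ▸ hmul⟩, rfl⟩

theorem mul_rieszProjection_eq_smul_of_rank_range_eq_one {Y : Type*} [NormedAddCommGroup Y]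
    [NormedSpace ℂ Y] [CompleteSpace Y] {T : Y →L[ℂ] Y} (hρ : 0 < ρ)
    (hspec : spectrum ℂ T ∩ closedBall lam ρ = {lam})
    (hrank : Module.rank ℂ (LinearMap.range
      ((rieszProjection T lam ρ : Y →L[ℂ] Y) : Y →ₗ[ℂ] Y)) = 1) :
    T * rieszProjection T lam ρ = lam • rieszProjection T lam ρ := by
  have hP0 : rieszProjection T lam ρ ≠ 0 := by
    intro hP
    rw [hP, ContinuousLinearMap.toLinearMap_zero, LinearMap.range_zero, rank_bot] at hrank
    exact zero_ne_one hrank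
  have hTP := (Commute.refl T).rieszProjection_right hρ.le (sphere_subset_resolventSet hρ hspec)
  obtain ⟨μ, hμ⟩ := Module.End.exists_mul_eq_smul_of_rank_range_eq_one hrank
    (congrArg ContinuousLinearMap.toLinearMap hTP.eq)
  replace hμ : T * rieszProjection T lam ρ = μ • rieszProjection T lam ρ :=
    ContinuousLinearMap.coe_injective hμ
  rwa [eq_of_mul_rieszProjection_eq_smul hρ hspec hμ hP0] at hμ

end RieszProjection

theorem simple_eigenvalue_error_bound_general (Y : Type*) [NormedAddCommGroup Y]
    [NormedSpace ℂ Y] [CompleteSpace Y] (T : Y →L[ℂ] Y) (Tn : ℕ → (Y →L[ℂ] Y))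
    (lam : ℂ)
    (hsimple : ∃ ρ : ℝ, 0 < ρ ∧
      spectrum ℂ T ∩ Metric.closedBall lam ρ = {lam} ∧
      Module.rank ℂ (LinearMap.range
        ((((2 * Real.pi * Complex.I)⁻¹ : ℂ) •
          (∮ z in C(lam, ρ), Ring.inverse (z • (1 : Y →L[ℂ] Y) - T)) :
            Y →L[ℂ] Y) : Y →ₗ[ℂ] Y)) = 1) :
    ∃ c > (0 : ℝ), ∃ δ > (0 : ℝ), ∀ᶠ n in atTop,
      ∀ z ∈ spectrum ℂ (Tn n), ‖z - lam‖ < δ → ‖z - lam‖ ≤ c * ‖Tn n - T‖ := by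
  obtain ⟨ρ, hρ, hspec, hrank⟩ := hsimple
  have hsphere := sphere_subset_resolventSet hρ hspec
  have hP := mul_rieszProjection_eq_smul_of_rank_range_eq_one hρ hspec hrank
  obtain ⟨C, hC, δ, hδ, hbound⟩ := exists_norm_resolvent_le_div
    (isIdempotentElem_rieszProjection hρ hsphere hP)
    ((Commute.refl T).rieszProjection_right hρ.le hsphere) hP
    (isUnit_algebraMap_sub_add_rieszProjection hρ hsphere hP)
  refine ⟨C, hC, δ, hδ, Eventually.of_forall fun n z hz hzδ => ?_⟩
  rcases eq_or_ne z lam with rfl | hne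
  · simpa using (by positivity : 0 ≤ C * ‖Tn n - T‖)
  obtain ⟨hres, hle⟩ := hbound z hne hzδ
  have hd : 0 < ‖z - lam‖ := norm_pos_iff.2 (sub_ne_zero.2 hne)
  calc ‖z - lam‖ ≤ ‖z - lam‖ * (‖resolvent T z‖ * ‖Tn n - T‖) :=
        le_mul_of_one_le_right hd.le (one_le_norm_resolvent_mul_norm_sub hres hz)
    _ ≤ ‖z - lam‖ * (C / ‖z - lam‖ * ‖Tn n - T‖) := by gcongr
    _ = C * ‖Tn n - T‖ := by field_simp

/-- (Error bound at a simple eigenvalue.)  Let `T`, `T_n` be bounded operators on a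
complex Banach space with `‖T_n − T‖ → 0`, and let `λ` be a simple isolated eigenvalue
of `T`: `λ ∈ σ(T)`, it is the only spectral point in some closed disk of radius `ρ`,
and the associated Riesz spectral projection
`P = (2πi)⁻¹ ∮_{|z−λ|=ρ} (z − T)⁻¹ dz` has rank one.  Then there are `c > 0` and
`δ > 0` such that for all large `n`, every `λ_n ∈ σ(T_n)` with `|λ_n − λ| < δ`
satisfies `|λ_n − λ| ≤ c ‖T_n − T‖`. -/
theorem simple_eigenvalue_error_bound (Y : Type*) [NormedAddCommGroup Y]
    [NormedSpace ℂ Y] [CompleteSpace Y] (T : Y →L[ℂ] Y) (Tn : ℕ → (Y →L[ℂ] Y))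
    (hconv : Tendsto (fun n => ‖Tn n - T‖) atTop (𝓝 0))
    (lam : ℂ) (hlam : lam ∈ spectrum ℂ T)
    (hsimple : ∃ ρ : ℝ, 0 < ρ ∧
      spectrum ℂ T ∩ Metric.closedBall lam ρ = {lam} ∧
      Module.rank ℂ (LinearMap.range
        ((((2 * Real.pi * Complex.I)⁻¹ : ℂ) •
          (∮ z in C(lam, ρ), Ring.inverse (z • (1 : Y →L[ℂ] Y) - T)) :
            Y →L[ℂ] Y) : Y →ₗ[ℂ] Y)) = 1) :
    ∃ c > (0 : ℝ), ∃ δ > (0 : ℝ), ∀ᶠ n in atTop,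
      ∀ z ∈ spectrum ℂ (Tn n), ‖z - lam‖ < δ → ‖z - lam‖ ≤ c * ‖Tn n - T‖ :=
  simple_eigenvalue_error_bound_general Y T Tn lam hsimple
end
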